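/- (Proposition 6.7 of the paper, case q = ∞.) Let N be a normalized K-unconditional coefficient quasi-norm, and set s_m = inf{ N(1_A) : A ⊆ ℕ finite, |A| ≥ m } for m ≥ 1 (the lower democracy function; note s_m ≥ 1/K > 0 automatically). If ∑_{m=1}^∞ 1/s_m < ∞, then N is strongly absolute: for every R > 0 there exists C′ > 0 such that every finitely supported f : ℕ → ℝ satisfies ‖f‖₁ ≤ max( C′·‖f‖_∞, N(f)/R ). -/

import Mathlib

/-- A normalized `K`-unconditional coefficient quasi-norm on finitely supported
real sequences. -/
structure IsCoeffQuasiNorm (K : ℝ) (N : (ℕ →₀ ℝ) → ℝ) : Prop where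
  nonneg : ∀ f, 0 ≤ N f
  eq_zero_iff : ∀ f, N f = 0 ↔ f = 0
  smul : ∀ (t : ℝ) (f : ℕ →₀ ℝ), N (t • f) = |t| * N f
  normalized : ∀ n : ℕ, N (Finsupp.single n 1) = 1
  uncond : ∀ f g : ℕ →₀ ℝ, (∀ n, |f n| ≤ |g n|) → N f ≤ K * N g

/-- The lower democracy function: `s_m = inf {N(1_A) : A ⊆ ℕ finite, |A| ≥ m}`. -/
noncomputable def lowerDem (N : (ℕ →₀ ℝ) → ℝ) (m : ℕ) : ℝ :=
  sInf {x | ∃ A : Finset ℕ, m ≤ A.card ∧ x = N (∑ n ∈ A, Finsupp.single n 1)}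

/-!
List the support of `f` by decreasing `|f n|`. The `m`-th entry is at most `‖f‖_∞`, and, being
dominated by the `m` entries up to it, at most `K N(f) / s_m` by unconditionality. Hence
`‖f‖₁ ≤ M ‖f‖_∞ + K N(f) ∑_{m > M} 1 / s_m`, and summability lets us pick `M` with the tail
below `1 / (2 R K)`.
-/

open Finset

theorem Finset.sum_le_sum_range_of_min_le {ι β : Type*} [DecidableEq ι] [AddCommMonoid β]
    [LinearOrder β] [IsOrderedAddMonoid β] (a : ι → β) (b : ℕ → β)
    (h : ∀ (A : Finset ι), ∀ i ∈ A, (∀ j ∈ A, a i ≤ a j) → a i ≤ b A.card) (S : Finset ι) :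
    ∑ i ∈ S, a i ≤ ∑ m ∈ range S.card, b (m + 1) := by
  induction S using Finset.induction_on_min_value a with
  | empty => simp
  | insert i S hi hmin ih =>
    have hi_min := h _ i (mem_insert_self i S) (forall_mem_insert _ _ _ |>.2 ⟨le_rfl, hmin⟩)
    rw [card_insert_of_notMem hi] at hi_min ⊢
    rw [sum_insert hi, sum_range_succ, add_comm (a i)]
    exact add_le_add ih hi_min

theorem sum_range_min_le_add_mul_tsum {T D : ℝ} (hT : 0 ≤ T) (hD : 0 ≤ D) {g : ℕ → ℝ}
    (hg0 : ∀ m, 0 ≤ g m) (hg : Summable g) (M L : ℕ) :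
    ∑ m ∈ range L, min T (D * g m) ≤ M * T + D * ∑' k, g (k + M) := by
  calc ∑ m ∈ range L, min T (D * g m)
      ≤ ∑ m ∈ range (M + L), min T (D * g m) :=
        sum_le_sum_of_subset_of_nonneg (range_subset_range.2 (by omega))
          fun m _ _ => le_min hT (mul_nonneg hD (hg0 m))
    _ = ∑ m ∈ range M, min T (D * g m) + ∑ k ∈ range L, min T (D * g (M + k)) :=
        sum_range_add _ _ _
    _ ≤ ∑ m ∈ range M, T + ∑ k ∈ range L, D * g (k + M) := by
        gcongr with m _ k _
        · exact min_le_left _ _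
        · rw [add_comm]; exact min_le_right _ _
    _ ≤ M * T + D * ∑' k, g (k + M) := by
        rw [sum_const, card_range, nsmul_eq_mul, ← mul_sum]
        gcongr
        exact ((summable_nat_add_iff M).2 hg).sum_le_tsum _ fun k _ => hg0 _

theorem Finsupp.sum_single_one_apply (A : Finset ℕ) (k : ℕ) :
    (∑ n ∈ A, Finsupp.single n (1 : ℝ)) k = if k ∈ A then 1 else 0 := by
  simp [Finsupp.finsetSum_apply, Finsupp.single_apply]

namespace IsCoeffQuasiNorm

variable {K : ℝ} {N : (ℕ →₀ ℝ) → ℝ}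

theorem one_le (hN : IsCoeffQuasiNorm K N) : 1 ≤ K := by
  simpa [hN.normalized] using hN.uncond (Finsupp.single 0 1) (Finsupp.single 0 1) fun _ => le_rfl

theorem lowerDem_le (hN : IsCoeffQuasiNorm K N) {m : ℕ} {A : Finset ℕ} (hA : m ≤ A.card) :
    lowerDem N m ≤ N (∑ n ∈ A, Finsupp.single n 1) :=
  csInf_le ⟨0, by rintro x ⟨A, -, rfl⟩; exact hN.nonneg _⟩ ⟨A, hA, rfl⟩

theorem inv_le_lowerDem (hN : IsCoeffQuasiNorm K N) {m : ℕ} (hm : 1 ≤ m) :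
    K⁻¹ ≤ lowerDem N m := by
  have hK : 0 < K := one_pos.trans_le hN.one_le
  refine le_csInf ⟨_, range m, by simp, rfl⟩ ?_
  rintro x ⟨A, hA, rfl⟩
  obtain ⟨n, hn⟩ : A.Nonempty := card_pos.mp (hm.trans hA)
  rw [inv_le_iff_one_le_mul₀' hK]
  calc 1 = N (Finsupp.single n 1) := (hN.normalized n).symm
    _ ≤ K * N (∑ n ∈ A, Finsupp.single n 1) := hN.uncond _ _ fun k => ?_
  rw [Finsupp.sum_single_one_apply, Finsupp.single_apply]
  split_ifs <;> simp_all

theorem lowerDem_pos (hN : IsCoeffQuasiNorm K N) {m : ℕ} (hm : 1 ≤ m) : 0 < lowerDem N m :=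
  (inv_pos.2 (one_pos.trans_le hN.one_le)).trans_le (hN.inv_le_lowerDem hm)

theorem mul_lowerDem_card_le (hN : IsCoeffQuasiNorm K N) (f : ℕ →₀ ℝ) {t : ℝ} (ht : 0 ≤ t)
    {A : Finset ℕ} (hA : ∀ k ∈ A, t ≤ |f k|) : t * lowerDem N A.card ≤ K * N f :=
  calc t * lowerDem N A.card ≤ t * N (∑ n ∈ A, Finsupp.single n 1) := by
        gcongr; exact hN.lowerDem_le le_rfl
    _ = N (t • ∑ n ∈ A, Finsupp.single n 1) := by rw [hN.smul, abs_of_nonneg ht]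
    _ ≤ K * N f := by
        refine hN.uncond _ _ fun k => ?_
        rw [Finsupp.smul_apply, Finsupp.sum_single_one_apply, smul_eq_mul]
        split_ifs with hk
        · simpa [abs_of_nonneg ht] using hA k hk
        · simp

end IsCoeffQuasiNorm

theorem stmt16_general (K : ℝ)
    (N : (ℕ →₀ ℝ) → ℝ) (hN : IsCoeffQuasiNorm K N)
    (hsum : Summable fun m : ℕ => 1 / lowerDem N (m + 1)) :
    ∀ R : ℝ, 0 < R → ∃ C' > 0, ∀ f : ℕ →₀ ℝ,
      ∑ n ∈ f.support, |f n| ≤ max (C' * ⨆ n, |f n|) (N f / R) := by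
  intro R hR
  have hK : 0 < K := one_pos.trans_le hN.one_le
  set g : ℕ → ℝ := fun m => 1 / lowerDem N (m + 1)
  have hg0 : ∀ m, 0 ≤ g m := fun m => (one_div_pos.2 (hN.lowerDem_pos (by omega))).le
  obtain ⟨M, hM⟩ : ∃ M, ∑' k, g (k + M) ≤ (2 * R * K)⁻¹ :=
    ((tendsto_sum_nat_add g).eventually (ge_mem_nhds (by positivity))).exists
  refine ⟨2 * M + 1, by positivity, fun f => ?_⟩
  set T := ⨆ n, |f n|
  have hfT : ∀ n, |f n| ≤ T := le_ciSup ((f.finite_range.image abs).bddAbove.mono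
    (by rintro _ ⟨n, rfl⟩; exact ⟨f n, ⟨n, rfl⟩, rfl⟩))
  have hT : 0 ≤ T := (abs_nonneg _).trans (hfT 0)
  have hKN : 0 ≤ K * N f := mul_nonneg hK.le (hN.nonneg f)
  have hrank : ∑ n ∈ f.support, |f n| ≤ ∑ m ∈ range f.support.card, min T (K * N f * g m) := by
    refine sum_le_sum_range_of_min_le (fun n => |f n|)
      (fun m => min T (K * N f * (1 / lowerDem N m))) (fun A i hi hmin => le_min (hfT i) ?_) _
    have hA : 0 < lowerDem N A.card := hN.lowerDem_pos (card_pos.2 ⟨i, hi⟩)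
    rw [mul_one_div, le_div_iff₀ hA]
    exact hN.mul_lowerDem_card_le f (abs_nonneg _) hmin
  have htail : K * N f * ∑' k, g (k + M) ≤ N f / R / 2 := by
    calc K * N f * ∑' k, g (k + M) ≤ K * N f * (2 * R * K)⁻¹ := by gcongr
      _ = N f / R / 2 := by field_simp
  have hsplit := hrank.trans (sum_range_min_le_add_mul_tsum hT hKN hg0 hsum M _)
  rcases le_total (M * T) (N f / R / 2) with h | h
  · exact le_max_of_le_right (by linarith)
  · exact le_max_of_le_left (by nlinarith)

/-- Proposition 6.7, case `q = ∞`: if the lower democracy function of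
a normalized `K`-unconditional coefficient quasi-norm satisfies
`∑_{m=1}^∞ 1/s_m < ∞`, then `N` is strongly absolute. -/
theorem stmt16 (K : ℝ) (hK : 1 ≤ K)
    (N : (ℕ →₀ ℝ) → ℝ) (hN : IsCoeffQuasiNorm K N)
    (hsum : Summable fun m : ℕ => 1 / lowerDem N (m + 1)) :
    ∀ R : ℝ, 0 < R → ∃ C' > 0, ∀ f : ℕ →₀ ℝ,
      ∑ n ∈ f.support, |f n| ≤ max (C' * ⨆ n, |f n|) (N f / R) :=
  stmt16_general K N hN hsum
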